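/- arXiv:1003.2649 — 7 statements merged into one kernel-verified Lean document; each statement's English description precedes it below -/
import Mathlib

section
/- For every stochastic matrix p on a nonempty finite set S and every real number α with 0 ≤ α ≤ α(p), where α(p) = Σ_j min_i p(i,j) is Doeblin's ergodicity coefficient, there exist a stochastic matrix E on S all of whose rows are identical and a stochastic matrix M on S such that p = α·E + (1−α)·M. -/
/-- A stochastic matrix on a finite set `S`: nonnegative entries, each row sums to 1. -/
def IsStochastic {S : Type*} [Fintype S] (p : Matrix S S ℝ) : Prop :=
  (∀ i j, 0 ≤ p i j) ∧ ∀ i, ∑ j, p i j = 1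

/-- A matrix all of whose rows are identical. -/
def IsConstRow {S : Type*} (E : Matrix S S ℝ) : Prop :=
  ∀ i i' j, E i j = E i' j

/-- Doeblin's ergodicity coefficient `α(p) = Σ_j min_i p(i,j)`. -/
noncomputable def doeblin {S : Type*} [Fintype S] [Nonempty S] (p : Matrix S S ℝ) : ℝ :=
  ∑ j, Finset.univ.inf' Finset.univ_nonempty fun i => p i j

/-!
The vector `m` of column minima of `p` satisfies `m j ≤ p i j` for all `i`, and its total mass is
`β = α(p)`. For `α ≤ β` the constant-row matrix `E` with rows `β⁻¹ m` therefore satisfies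
`α E ≤ p` entrywise (if `β ≤ 0`, then `α ≤ 0` and any stochastic `E` will do), and then `M = (1 - α)⁻¹ (p - α E)` is stochastic. At `α = 1` this breaks down,
but then `E ≤ p` forces `E = p`, because both have row sums `1`.
-/

section

open Finset Matrix

theorem isConstRow_replicateRow {S : Type*} (v : S → ℝ) : IsConstRow (replicateRow S v) :=
  fun _ _ _ => rfl

variable {S : Type*} [Fintype S]

theorem isStochastic_iff_forall_mem_stdSimplex {p : Matrix S S ℝ} :
    IsStochastic p ↔ ∀ i, p i ∈ stdSimplex ℝ S :=
  ⟨fun hp i => ⟨hp.1 i, hp.2 i⟩, fun h => ⟨fun i => (h i).1, fun i => (h i).2⟩⟩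

theorem isStochastic_replicateRow {v : S → ℝ} (hv : v ∈ stdSimplex ℝ S) :
    IsStochastic (replicateRow S v) :=
  isStochastic_iff_forall_mem_stdSimplex.2 fun _ => hv

namespace IsStochastic

variable {p q E : Matrix S S ℝ}

theorem eq_of_le (hp : IsStochastic p) (hq : IsStochastic q) (hle : ∀ i j, p i j ≤ q i j) :
    p = q := by
  ext i j
  have hsum : ∑ j, p i j = ∑ j, q i j := by rw [hp.2 i, hq.2 i]
  exact (sum_eq_sum_iff_of_le fun j _ => hle i j).1 hsum j (mem_univ j)

theorem le_one_of_mul_le (hp : IsStochastic p) (hE : IsStochastic E) {α : ℝ} (i : S)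
    (hle : ∀ j, α * E i j ≤ p i j) : α ≤ 1 :=
  calc α = ∑ j, α * E i j := by rw [← mul_sum, hE.2 i, mul_one]
    _ ≤ ∑ j, p i j := sum_le_sum fun j _ => hle j
    _ = 1 := hp.2 i

theorem exists_eq_smul_add_smul (hp : IsStochastic p) (hE : IsStochastic E) {α : ℝ}
    (hle : ∀ i j, α * E i j ≤ p i j) :
    ∃ M, IsStochastic M ∧ p = α • E + (1 - α) • M := by
  by_cases hα : α = 1
  · subst hα
    refine ⟨p, hp, ?_⟩
    rw [hE.eq_of_le hp fun i j => by simpa using hle i j]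
    simp
  have hα' : 1 - α ≠ 0 := sub_ne_zero.2 (Ne.symm hα)
  refine ⟨(1 - α)⁻¹ • (p - α • E), ⟨fun i j => ?_, fun i => ?_⟩, ?_⟩
  · have hlt : α < 1 := lt_of_le_of_ne (hp.le_one_of_mul_le hE i (hle i)) hα
    exact mul_nonneg (inv_nonneg.2 (sub_nonneg.2 hlt.le)) (sub_nonneg.2 (hle i j))
  · simp only [Matrix.smul_apply, Matrix.sub_apply, smul_eq_mul]
    rw [← mul_sum, sum_sub_distrib, ← mul_sum, hp.2 i, hE.2 i, mul_one, inv_mul_cancel₀ hα']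
  · rw [smul_smul, mul_inv_cancel₀ hα', one_smul, add_sub_cancel]

end IsStochastic

variable [Nonempty S]

noncomputable def colMin (p : Matrix S S ℝ) (j : S) : ℝ :=
  univ.inf' univ_nonempty fun i => p i j

theorem doeblin_eq_sum_colMin (p : Matrix S S ℝ) : doeblin p = ∑ j, colMin p j :=
  rfl

theorem colMin_le (p : Matrix S S ℝ) (i j : S) : colMin p j ≤ p i j :=
  inf'_le _ (mem_univ i)

theorem IsStochastic.colMin_nonneg {p : Matrix S S ℝ} (hp : IsStochastic p) (j : S) :
    0 ≤ colMin p j :=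
  le_inf' _ _ fun i _ => hp.1 i j

theorem IsStochastic.exists_constRow_mul_le {p : Matrix S S ℝ} (hp : IsStochastic p) {α : ℝ}
    (hα : α ≤ doeblin p) :
    ∃ E, IsStochastic E ∧ IsConstRow E ∧ ∀ i j, α * E i j ≤ p i j := by
  rcases lt_or_ge 0 (doeblin p) with hβ | hβ
  · have hm : (doeblin p)⁻¹ • colMin p ∈ stdSimplex ℝ S := by
      refine ⟨fun j => mul_nonneg (inv_nonneg.2 hβ.le) (hp.colMin_nonneg j), ?_⟩
      simp only [Pi.smul_apply, smul_eq_mul]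
      rw [← mul_sum, ← doeblin_eq_sum_colMin, inv_mul_cancel₀ hβ.ne']
    refine ⟨_, isStochastic_replicateRow hm, isConstRow_replicateRow _, fun i j => ?_⟩
    calc α * ((doeblin p)⁻¹ * colMin p j)
        = α * (doeblin p)⁻¹ * colMin p j := (mul_assoc _ _ _).symm
      _ ≤ 1 * colMin p j := by
          gcongr
          · exact hp.colMin_nonneg j
          · exact (div_le_one hβ).2 hα
      _ ≤ p i j := by rw [one_mul]; exact colMin_le p i j
  · obtain ⟨i₀⟩ := ‹Nonempty S›
    refine ⟨_, isStochastic_replicateRow ⟨hp.1 i₀, hp.2 i₀⟩, isConstRow_replicateRow _,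
      fun i j => ?_⟩
    exact (mul_nonpos_of_nonpos_of_nonneg (hα.trans hβ) (hp.1 i₀ j)).trans (hp.1 i j)

end

theorem doeblin_decomposition_general {S : Type*} [Fintype S] [Nonempty S]
    (p : Matrix S S ℝ) (hp : IsStochastic p)
    (α : ℝ) (hα1 : α ≤ doeblin p) :
    ∃ E M : Matrix S S ℝ, IsStochastic E ∧ IsConstRow E ∧ IsStochastic M ∧
      p = α • E + (1 - α) • M := by
  obtain ⟨E, hE, hEconst, hEle⟩ := hp.exists_constRow_mul_le hα1
  obtain ⟨M, hM, hpEM⟩ := hp.exists_eq_smul_add_smul hE hEle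
  exact ⟨E, M, hE, hEconst, hM, hpEM⟩

theorem doeblin_decomposition {S : Type*} [Fintype S] [Nonempty S]
    (p : Matrix S S ℝ) (hp : IsStochastic p)
    (α : ℝ) (hα0 : 0 ≤ α) (hα1 : α ≤ doeblin p) :
    ∃ E M : Matrix S S ℝ, IsStochastic E ∧ IsConstRow E ∧ IsStochastic M ∧
      p = α • E + (1 - α) • M :=
  doeblin_decomposition_general p hp α hα1
end

section
/- Let p be a stochastic matrix on a nonempty finite set S, and suppose E ∈ ℰ and M ∈ 𝒫 satisfy p = α(p)·E + (1−α(p))·M. If α(p) < 1, then α(M) = 0; equivalently, M has a zero entry in each of its columns. -/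
open Finset

namespace Finset

variable {ι : Type*} {s : Finset ι}

lemma inf'_const_add_mul (H : s.Nonempty) (f : ι → ℝ) (c : ℝ) {t : ℝ} (ht : 0 ≤ t) :
    s.inf' H (fun i => c + t * f i) = c + t * s.inf' H f :=
  (apply_inf'_eq_inf'_comp H (fun x => c + t * x)
    fun _ _ => ((monotone_id.const_mul ht).const_add c).map_min).symm

lemma inf'_eq_zero_iff_of_nonneg (H : s.Nonempty) {f : ι → ℝ} (hf : ∀ i ∈ s, 0 ≤ f i) :
    s.inf' H f = 0 ↔ ∃ i ∈ s, f i = 0 := by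
  constructor
  · intro h
    obtain ⟨i, hi, hmin⟩ := exists_mem_eq_inf' H f
    exact ⟨i, hi, hmin ▸ h⟩
  · rintro ⟨i, hi, hzero⟩
    exact le_antisymm (hzero ▸ inf'_le f hi) (le_inf' H f hf)

end Finset

section Doeblin

variable {S : Type*} [Fintype S] [Nonempty S]

lemma doeblin_smul_add_smul_of_isConstRow {E : Matrix S S ℝ} (hE : IsConstRow E) (M : Matrix S S ℝ)
    (i : S) (a : ℝ) {t : ℝ} (ht : 0 ≤ t) :
    doeblin (a • E + t • M) = a * ∑ j, E i j + t * doeblin M := by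
  have hcol : ∀ j, (univ.inf' univ_nonempty fun k => (a • E + t • M) k j) =
      a * E i j + t * univ.inf' univ_nonempty fun k => M k j := fun j => by
    simp only [Matrix.add_apply, Matrix.smul_apply, smul_eq_mul, hE _ i j]
    exact inf'_const_add_mul univ_nonempty _ _ ht
  simp only [doeblin, hcol, sum_add_distrib, mul_sum]

lemma doeblin_smul_add_smul_of_isStochastic {E : Matrix S S ℝ} (hE : IsStochastic E)
    (hErow : IsConstRow E) (M : Matrix S S ℝ) (a : ℝ) {t : ℝ} (ht : 0 ≤ t) :
    doeblin (a • E + t • M) = a + t * doeblin M := by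
  obtain ⟨i⟩ := ‹Nonempty S›
  rw [doeblin_smul_add_smul_of_isConstRow hErow M i a ht, hE.2 i, mul_one]

lemma doeblin_eq_zero_iff_of_nonneg {M : Matrix S S ℝ} (hM : ∀ i j, 0 ≤ M i j) :
    doeblin M = 0 ↔ ∀ j, ∃ i, M i j = 0 := by
  have hcol : ∀ j, 0 ≤ univ.inf' univ_nonempty fun i => M i j :=
    fun j => le_inf' _ _ fun i _ => hM i j
  simp only [doeblin, sum_eq_zero_iff_of_nonneg fun j _ => hcol j,
    inf'_eq_zero_iff_of_nonneg univ_nonempty fun i _ => hM i _, mem_univ, true_and,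
    forall_const]

end Doeblin

theorem doeblin_remainder_coeff_zero_general {S : Type*} [Fintype S] [Nonempty S]
    (p E M : Matrix S S ℝ)
    (hE : IsStochastic E) (hErow : IsConstRow E) (hM : IsStochastic M)
    (hdec : p = doeblin p • E + (1 - doeblin p) • M)
    (hlt : doeblin p < 1) :
    doeblin M = 0 ∧ ∀ j, ∃ i, M i j = 0 := by
  have hbalance : doeblin p = doeblin p + (1 - doeblin p) * doeblin M :=
    calc doeblin p = doeblin (doeblin p • E + (1 - doeblin p) • M) := congrArg doeblin hdec
      _ = doeblin p + (1 - doeblin p) * doeblin M :=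
        doeblin_smul_add_smul_of_isStochastic hE hErow M _ (sub_nonneg.2 hlt.le)
  have hM0 : doeblin M = 0 := by
    have hprod : (1 - doeblin p) * doeblin M = 0 := by linarith
    exact (mul_eq_zero.1 hprod).resolve_left (sub_ne_zero.2 hlt.ne')
  exact ⟨hM0, (doeblin_eq_zero_iff_of_nonneg hM.1).1 hM0⟩

theorem doeblin_remainder_coeff_zero {S : Type*} [Fintype S] [Nonempty S]
    (p E M : Matrix S S ℝ) (hp : IsStochastic p)
    (hE : IsStochastic E) (hErow : IsConstRow E) (hM : IsStochastic M)
    (hdec : p = doeblin p • E + (1 - doeblin p) • M)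
    (hlt : doeblin p < 1) :
    doeblin M = 0 ∧ ∀ j, ∃ i, M i j = 0 :=
  doeblin_remainder_coeff_zero_general p E M hE hErow hM hdec hlt
end

section
/- Let p be a stochastic matrix on a nonempty finite set S, and suppose E ∈ ℰ and M ∈ 𝒫 satisfy p = α(p)·E + (1−α(p))·M. If α(p) > 0, then for all i, j ∈ S one has E(i,j) = (1/α(p))·min_{s∈S} p(s,j); in particular, the matrix E in such a decomposition is uniquely determined. -/
theorem doeblin_E_aux {S : Type*} [Fintype S] [Nonempty S]
    (p E M : Matrix S S ℝ) (hp : IsStochastic p)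
    (hE : IsStochastic E) (hErow : IsConstRow E) (hM : IsStochastic M)
    (hdec : p = doeblin p • E + (1 - doeblin p) • M)
    (hpos : 0 < doeblin p) :
    ∀ i j, E i j = (1 / doeblin p) *
        Finset.univ.inf' Finset.univ_nonempty (fun s => p s j) := by
  set a := doeblin p with ha
  obtain ⟨i0⟩ := (inferInstance : Nonempty S)
  have hpe : ∀ i j, p i j = a * E i j + (1 - a) * M i j := by
    intro i j
    conv_lhs => rw [hdec]
    simp [Matrix.add_apply, Matrix.smul_apply, smul_eq_mul]
  have ha1 : a ≤ 1 := by
    calc a = ∑ j, Finset.univ.inf' Finset.univ_nonempty (fun i => p i j) := rfl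
    _ ≤ ∑ j, p i0 j :=
      Finset.sum_le_sum (fun j _ => Finset.inf'_le _ (Finset.mem_univ i0))
    _ = 1 := hp.2 i0
  have key : ∀ i j, Finset.univ.inf' Finset.univ_nonempty (fun s => p s j)
      = a * E i j + (1 - a) * Finset.univ.inf' Finset.univ_nonempty (fun s => M s j) := by
    intro i j
    apply le_antisymm
    · obtain ⟨i1, -, h1⟩ :=
        Finset.exists_mem_eq_inf' (Finset.univ_nonempty (α := S)) (fun s => M s j)
      calc Finset.univ.inf' Finset.univ_nonempty (fun s => p s j) ≤ p i1 j :=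
            Finset.inf'_le _ (Finset.mem_univ i1)
      _ = a * E i1 j + (1 - a) * M i1 j := hpe i1 j
      _ = a * E i j + (1 - a) * Finset.univ.inf' Finset.univ_nonempty (fun s => M s j) := by
            rw [hErow i1 i j, ← h1]
    · apply Finset.le_inf'
      intro s _
      rw [hpe s j, hErow i s j]
      have h2 : Finset.univ.inf' Finset.univ_nonempty (fun s => M s j) ≤ M s j :=
        Finset.inf'_le _ (Finset.mem_univ s)
      nlinarith
  have hMnn : ∀ j, 0 ≤ Finset.univ.inf' Finset.univ_nonempty (fun s => M s j) := by
    intro j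
    exact Finset.le_inf' _ _ (fun s _ => hM.1 s j)
  have hsum : ∑ j, (1 - a) * Finset.univ.inf' Finset.univ_nonempty (fun s => M s j) = 0 := by
    have h1 : a = ∑ j, (a * E i0 j + (1 - a) *
        Finset.univ.inf' Finset.univ_nonempty (fun s => M s j)) := by
      calc a = ∑ j, Finset.univ.inf' Finset.univ_nonempty (fun i => p i j) := rfl
      _ = _ := Finset.sum_congr rfl (fun j _ => key i0 j)
    rw [Finset.sum_add_distrib, ← Finset.mul_sum, hE.2 i0, mul_one] at h1
    linarith
  have hz : ∀ j, (1 - a) * Finset.univ.inf' Finset.univ_nonempty (fun s => M s j) = 0 := by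
    intro j
    have := (Finset.sum_eq_zero_iff_of_nonneg
      (fun j _ => mul_nonneg (by linarith) (hMnn j))).mp hsum j (Finset.mem_univ j)
    exact this
  intro i j
  have := key i j
  rw [hz j, add_zero] at this
  rw [this]
  field_simp

theorem doeblin_E_unique {S : Type*} [Fintype S] [Nonempty S]
    (p E M : Matrix S S ℝ) (hp : IsStochastic p)
    (hE : IsStochastic E) (hErow : IsConstRow E) (hM : IsStochastic M)
    (hdec : p = doeblin p • E + (1 - doeblin p) • M)
    (hpos : 0 < doeblin p) :
    (∀ i j, E i j = (1 / doeblin p) *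
        Finset.univ.inf' Finset.univ_nonempty (fun s => p s j)) ∧
    ∀ E' M' : Matrix S S ℝ, IsStochastic E' → IsConstRow E' → IsStochastic M' →
      p = doeblin p • E' + (1 - doeblin p) • M' → E' = E := by
  refine ⟨doeblin_E_aux p E M hp hE hErow hM hdec hpos, ?_⟩
  intro E' M' hE' hErow' hM' hdec'
  ext i j
  rw [doeblin_E_aux p E' M' hp hE' hErow' hM' hdec' hpos i j,
    doeblin_E_aux p E M hp hE hErow hM hdec hpos i j]
end

section
/- Let p be a stochastic matrix on a nonempty finite set S. If α ∈ [0,1], E ∈ ℰ, and M ∈ 𝒫 satisfy p = α·E + (1−α)·M, then α(p) ≥ α. -/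
theorem doeblin_ge_of_decomposition {S : Type*} [Fintype S] [Nonempty S]
    (p E M : Matrix S S ℝ) (hp : IsStochastic p)
    (α : ℝ) (hα : α ∈ Set.Icc (0 : ℝ) 1)
    (hE : IsStochastic E) (hErow : IsConstRow E) (hM : IsStochastic M)
    (hdec : p = α • E + (1 - α) • M) :
    α ≤ doeblin p := by
  obtain ⟨i₀⟩ := ‹Nonempty S›
  have key : ∀ j, α * E i₀ j ≤ Finset.univ.inf' Finset.univ_nonempty fun i => p i j := by
    intro j
    apply Finset.le_inf'
    intro i _
    have : p i j = α * E i j + (1 - α) * M i j := by rw [hdec]; simp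
    rw [this, hErow i₀ i j]
    have h1 : 0 ≤ (1 - α) * M i j :=
      mul_nonneg (by linarith [hα.2]) (hM.1 i j)
    linarith
  calc α = α * ∑ j, E i₀ j := by rw [hE.2 i₀, mul_one]
    _ = ∑ j, α * E i₀ j := by rw [Finset.mul_sum]
    _ ≤ doeblin p := Finset.sum_le_sum fun j _ => key j
end

section
/- Let p and q be stochastic matrices on a nonempty finite set S, and suppose p = α₁·E₁ + (1−α₁)·M₁ and q = α₂·E₂ + (1−α₂)·M₂ with α₁, α₂ ∈ [0,1], E₁, E₂ ∈ ℰ, and M₁, M₂ ∈ 𝒫. Then there exists E₃ ∈ ℰ such that p·q = (1 − (1−α₁)(1−α₂))·E₃ + (1−α₁)(1−α₂)·M₁M₂. -/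
lemma stoch_mul {S : Type*} [Fintype S] {A B : Matrix S S ℝ}
    (hA : IsStochastic A) (hB : IsStochastic B) : IsStochastic (A * B) := by
  constructor
  · intro i j
    exact Finset.sum_nonneg fun k _ => mul_nonneg (hA.1 i k) (hB.1 k j)
  · intro i
    simp only [Matrix.mul_apply]
    rw [Finset.sum_comm]
    simp_rw [← Finset.mul_sum, hB.2, mul_one]
    exact hA.2 i

lemma constRow_mul {S : Type*} [Fintype S] {A B : Matrix S S ℝ}
    (hA : IsConstRow A) : IsConstRow (A * B) := by
  intro i i' j
  simp only [Matrix.mul_apply]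
  exact Finset.sum_congr rfl fun k _ => by rw [hA i i' k]

lemma mul_constRow {S : Type*} [Fintype S] {A B : Matrix S S ℝ}
    (hA : IsStochastic A) (hB : IsConstRow B) : A * B = B := by
  ext i j
  simp only [Matrix.mul_apply]
  calc ∑ k, A i k * B k j = ∑ k, A i k * B i j := by
        exact Finset.sum_congr rfl fun k _ => by rw [hB k i j]
    _ = B i j := by rw [← Finset.sum_mul, hA.2, one_mul]

theorem product_decomposition {S : Type*} [Fintype S] [Nonempty S]
    (p q E₁ E₂ M₁ M₂ : Matrix S S ℝ) (hp : IsStochastic p) (hq : IsStochastic q)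
    (α₁ α₂ : ℝ) (hα₁ : α₁ ∈ Set.Icc (0 : ℝ) 1) (hα₂ : α₂ ∈ Set.Icc (0 : ℝ) 1)
    (hE₁ : IsStochastic E₁) (hE₁row : IsConstRow E₁)
    (hE₂ : IsStochastic E₂) (hE₂row : IsConstRow E₂)
    (hM₁ : IsStochastic M₁) (hM₂ : IsStochastic M₂)
    (hpdec : p = α₁ • E₁ + (1 - α₁) • M₁)
    (hqdec : q = α₂ • E₂ + (1 - α₂) • M₂) :
    ∃ E₃ : Matrix S S ℝ, IsStochastic E₃ ∧ IsConstRow E₃ ∧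
      p * q = (1 - (1 - α₁) * (1 - α₂)) • E₃ + ((1 - α₁) * (1 - α₂)) • (M₁ * M₂) := by
  obtain ⟨h1, h2⟩ := hα₁
  obtain ⟨h3, h4⟩ := hα₂
  set β : ℝ := 1 - (1 - α₁) * (1 - α₂) with hβ
  have hβ0 : 0 ≤ β := by nlinarith
  have hexpand : p * q = (α₁ * α₂) • (E₁ * E₂) + (α₁ * (1 - α₂)) • (E₁ * M₂)
      + ((1 - α₁) * α₂) • E₂ + ((1 - α₁) * (1 - α₂)) • (M₁ * M₂) := by
    rw [hpdec, hqdec]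
    rw [add_mul, mul_add, mul_add]
    rw [Matrix.smul_mul, Matrix.smul_mul, Matrix.mul_smul, Matrix.mul_smul,
        Matrix.smul_mul, Matrix.smul_mul, Matrix.mul_smul, Matrix.mul_smul]
    rw [mul_constRow hM₁ hE₂row]
    rw [smul_smul, smul_smul, smul_smul, smul_smul]
    abel
  rcases eq_or_lt_of_le hβ0 with hβeq | hβpos
  · -- β = 0 : then α₁ = 0 and α₂ = 0
    have hα₁0 : α₁ = 0 := by nlinarith
    have hα₂0 : α₂ = 0 := by nlinarith
    refine ⟨E₁, hE₁, hE₁row, ?_⟩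
    rw [hexpand, hα₁0, hα₂0]
    simp
    exact Or.inl hβeq.symm
  · -- β > 0
    set E₃ : Matrix S S ℝ := β⁻¹ • ((α₁ * α₂) • (E₁ * E₂) + (α₁ * (1 - α₂)) • (E₁ * M₂)
      + ((1 - α₁) * α₂) • E₂) with hE₃
    have hsum : α₁ * α₂ + α₁ * (1 - α₂) + (1 - α₁) * α₂ = β := by rw [hβ]; ring
    have hc1 : (0:ℝ) ≤ α₁ * α₂ := mul_nonneg h1 h3
    have hc2 : (0:ℝ) ≤ α₁ * (1 - α₂) := mul_nonneg h1 (by linarith)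
    have hc3 : (0:ℝ) ≤ (1 - α₁) * α₂ := mul_nonneg (by linarith) h3
    have hS1 := stoch_mul hE₁ hE₂
    have hS2 := stoch_mul hE₁ hM₂
    refine ⟨E₃, ⟨?_, ?_⟩, ?_, ?_⟩
    · intro i j
      simp only [hE₃, Matrix.smul_apply, Matrix.add_apply, smul_eq_mul]
      have : 0 ≤ α₁ * α₂ * (E₁ * E₂) i j + α₁ * (1 - α₂) * (E₁ * M₂) i j
          + (1 - α₁) * α₂ * E₂ i j := by
        have := hS1.1 i j; have := hS2.1 i j; have := hE₂.1 i j
        positivity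
      positivity
    · intro i
      simp only [hE₃, Matrix.smul_apply, Matrix.add_apply, smul_eq_mul]
      rw [← Finset.mul_sum]
      simp_rw [Finset.sum_add_distrib, ← Finset.mul_sum]
      rw [hS1.2 i, hS2.2 i, hE₂.2 i]
      field_simp
      linarith [hsum]
    · intro i i' j
      simp only [hE₃, Matrix.smul_apply, Matrix.add_apply, smul_eq_mul]
      rw [constRow_mul hE₁row i i' j, constRow_mul hE₁row i i' j, hE₂row i i' j]
    · rw [hexpand, hE₃, smul_smul, mul_inv_cancel₀ (ne_of_gt hβpos), one_smul]
end

section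
/- Let (p_k)_{k≥0} be a sequence of stochastic matrices on a nonempty finite set S. If there exists a strictly increasing sequence of positive integers (n_k)_{k≥0} such that Σ_{k=0}^∞ α(∏_{i=n_k}^{n_{k+1}−1} p_i) = +∞, then for every m ≥ 0, α(∏_{k=m}^{n} p_k) → 1 as n → ∞. -/
open Filter

/-- The ordered matrix product `p_m * p_{m+1} * ⋯ * p_n`. -/
noncomputable def prodFromTo {S : Type*} [Fintype S] [DecidableEq S]
    (p : ℕ → Matrix S S ℝ) (m n : ℕ) : Matrix S S ℝ :=
  ((List.range (n + 1 - m)).map fun k => p (m + k)).prod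

/-- Weak ergodicity of a sequence of stochastic matrices. -/
def WeaklyErgodic {S : Type*} [Fintype S] [DecidableEq S] (p : ℕ → Matrix S S ℝ) : Prop :=
  ∀ (m : ℕ) (i j s : S),
    Tendsto (fun n => |prodFromTo p m n i s - prodFromTo p m n j s|) atTop (nhds 0)

section Aux

variable {S : Type*} [Fintype S] [DecidableEq S]

lemma isStochastic_one : IsStochastic (1 : Matrix S S ℝ) := by
  constructor
  · intro i j
    by_cases h : i = j <;> simp [Matrix.one_apply, h]
  · intro i
    simp [Matrix.one_apply]

lemma isStochastic_mul {A B : Matrix S S ℝ} (hA : IsStochastic A) (hB : IsStochastic B) :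
    IsStochastic (A * B) := by
  constructor
  · intro i j
    exact Finset.sum_nonneg fun k _ => mul_nonneg (hA.1 i k) (hB.1 k j)
  · intro i
    simp only [Matrix.mul_apply]
    rw [Finset.sum_comm]
    calc ∑ k, ∑ j, A i k * B k j = ∑ k, A i k * ∑ j, B k j := by
          simp [Finset.mul_sum]
      _ = 1 := by simp [hB.2, hA.2 i]

lemma isStochastic_prodFromTo (p : ℕ → Matrix S S ℝ) (hp : ∀ k, IsStochastic (p k))
    (m n : ℕ) : IsStochastic (prodFromTo p m n) := by
  unfold prodFromTo
  generalize (n + 1 - m) = L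
  induction L with
  | zero => simpa using isStochastic_one
  | succ L ih =>
      rw [List.range_succ, List.map_append, List.prod_append]
      exact isStochastic_mul ih (by simpa using hp _)

variable [Nonempty S]

lemma doeblin_nonneg {A : Matrix S S ℝ} (hA : IsStochastic A) : 0 ≤ doeblin A := by
  refine Finset.sum_nonneg fun j _ => ?_
  exact Finset.le_inf' _ _ fun i _ => hA.1 i j

lemma doeblin_le_one {A : Matrix S S ℝ} (hA : IsStochastic A) : doeblin A ≤ 1 := by
  obtain ⟨i₀⟩ := (inferInstance : Nonempty S)
  calc doeblin A ≤ ∑ j, A i₀ j :=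
        Finset.sum_le_sum fun j _ => Finset.inf'_le _ (Finset.mem_univ i₀)
    _ = 1 := hA.2 i₀

lemma one_sub_doeblin_mul {A B : Matrix S S ℝ} (hA : IsStochastic A) (hB : IsStochastic B) :
    1 - doeblin (A * B) ≤ (1 - doeblin A) * (1 - doeblin B) := by
  classical
  set a : S → ℝ := fun j => Finset.univ.inf' Finset.univ_nonempty fun i => A i j with ha
  set b : S → ℝ := fun s => Finset.univ.inf' Finset.univ_nonempty fun j => B j s with hb
  have haj : ∀ i j, a j ≤ A i j := fun i j => Finset.inf'_le _ (Finset.mem_univ i)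
  have hbj : ∀ j s, b s ≤ B j s := fun j s => Finset.inf'_le _ (Finset.mem_univ j)
  have claim : ∀ i s, b s + ∑ j, a j * (B j s - b s) ≤ (A * B) i s := by
    intro i s
    have h1 : (A * B) i s = b s + ∑ j, A i j * (B j s - b s) := by
      have : (A * B) i s = ∑ j, A i j * B j s := rfl
      rw [this]
      have : ∑ j, A i j * B j s = ∑ j, (A i j * b s + A i j * (B j s - b s)) := by
        congr 1; funext j; ring
      rw [this, Finset.sum_add_distrib, ← Finset.sum_mul, hA.2 i, one_mul]
    rw [h1]
    gcongr with j _
    · exact sub_nonneg.2 (hbj j s)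
    · exact haj i j
  have key : doeblin B + doeblin A * (1 - doeblin B) ≤ doeblin (A * B) := by
    have h2 : doeblin (A * B) ≥ ∑ s, (b s + ∑ j, a j * (B j s - b s)) := by
      refine Finset.sum_le_sum fun s _ => ?_
      exact Finset.le_inf' _ _ fun i _ => claim i s
    refine le_trans (le_of_eq ?_) h2
    rw [Finset.sum_add_distrib, Finset.sum_comm]
    have h3 : ∀ j, ∑ s, a j * (B j s - b s) = a j * (1 - doeblin B) := by
      intro j
      rw [← Finset.mul_sum, Finset.sum_sub_distrib, hB.2 j]
      rfl
    simp only [h3, ← Finset.sum_mul]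
    rfl
  nlinarith [key]

lemma prodFromTo_succ (p : ℕ → Matrix S S ℝ) {m n : ℕ} (h : m ≤ n + 1) :
    prodFromTo p m (n + 1) = prodFromTo p m n * p (n + 1) := by
  unfold prodFromTo
  rw [show n + 1 + 1 - m = (n + 1 - m) + 1 by omega, List.range_succ, List.map_append,
    List.prod_append]
  simp only [List.map_cons, List.map_nil, List.prod_cons, List.prod_nil, mul_one]
  rw [show m + (n + 1 - m) = n + 1 from by omega]

lemma prodFromTo_split (p : ℕ → Matrix S S ℝ) {m r n : ℕ} (h1 : m ≤ r) (h2 : r ≤ n) :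
    prodFromTo p m n = prodFromTo p m r * prodFromTo p (r + 1) n := by
  induction n, h2 using Nat.le_induction with
  | base =>
      have : prodFromTo p (r + 1) r = 1 := by
        unfold prodFromTo
        rw [show r + 1 - (r + 1) = 0 by omega]
        simp
      rw [this, mul_one]
  | succ n hrn ih =>
      rw [prodFromTo_succ p (by omega : m ≤ n + 1), ih,
        prodFromTo_succ p (by omega : r + 1 ≤ n + 1), mul_assoc]

end Aux

theorem doeblin_tendsto_one {S : Type*} [Fintype S] [Nonempty S] [DecidableEq S]
    (p : ℕ → Matrix S S ℝ) (hp : ∀ k, IsStochastic (p k))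
    (nseq : ℕ → ℕ) (hmono : StrictMono nseq) (hpos : ∀ k, 0 < nseq k)
    (hdiv : Tendsto
      (fun N => ∑ k ∈ Finset.range N, doeblin (prodFromTo p (nseq k) (nseq (k + 1) - 1)))
      atTop atTop) :
    ∀ m, Tendsto (fun n => doeblin (prodFromTo p m n)) atTop (nhds 1) := by
  set α : ℕ → ℝ := fun k => doeblin (prodFromTo p (nseq k) (nseq (k + 1) - 1)) with hα
  have hst : ∀ a b, IsStochastic (prodFromTo p a b) := isStochastic_prodFromTo p hp
  have hα0 : ∀ k, 0 ≤ α k := fun k => doeblin_nonneg (hst _ _)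
  have hα1 : ∀ k, α k ≤ 1 := fun k => doeblin_le_one (hst _ _)
  -- chain bound over blocks
  have chain : ∀ K k n, nseq (k + K) - 1 ≤ n →
      1 - doeblin (prodFromTo p (nseq k) n) ≤ ∏ j ∈ Finset.range K, (1 - α (k + j)) := by
    intro K
    induction K with
    | zero =>
        intro k n _
        simpa using doeblin_nonneg (hst (nseq k) n)
    | succ K ih =>
        intro k n hn
        have hlt : nseq k < nseq (k + 1) := hmono (by omega)
        have hp1 : 0 < nseq (k + 1) := hpos _
        have h2 : nseq (k + 1) - 1 ≤ n := by
          have := hmono.monotone (show k + 1 ≤ k + (K + 1) by omega)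
          omega
        rw [prodFromTo_split p (show nseq k ≤ nseq (k + 1) - 1 by omega) h2,
          show nseq (k + 1) - 1 + 1 = nseq (k + 1) by omega]
        refine le_trans (one_sub_doeblin_mul (hst _ _) (hst _ _)) ?_
        rw [Finset.prod_range_succ']
        have hrest := ih (k + 1) n (by rw [show k + 1 + K = k + (K + 1) by omega]; exact hn)
        have hidx : ∀ j, k + (j + 1) = k + 1 + j := fun j => by omega
        calc (1 - α k) * (1 - doeblin (prodFromTo p (nseq (k + 1)) n))
            ≤ (1 - α k) * ∏ j ∈ Finset.range K, (1 - α (k + 1 + j)) := by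
              have h0 : (0:ℝ) ≤ 1 - α k := by linarith [hα1 k]
              exact mul_le_mul_of_nonneg_left hrest h0
          _ = (∏ j ∈ Finset.range K, (1 - α (k + (j + 1)))) * (1 - α (k + 0)) := by
              rw [mul_comm]
              congr 1
              · exact Finset.prod_congr rfl fun j _ => by rw [hidx j]
  -- prefix bound
  have prefixb : ∀ m a n, m ≤ a → a ≤ n + 1 →
      1 - doeblin (prodFromTo p m n) ≤ 1 - doeblin (prodFromTo p a n) := by
    intro m a n hma han
    rcases eq_or_lt_of_le hma with h | h
    · rw [h]
    · have ha1 : 1 ≤ a := by omega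
      rw [prodFromTo_split p (show m ≤ a - 1 by omega) (show a - 1 ≤ n by omega),
        show a - 1 + 1 = a by omega]
      refine le_trans (one_sub_doeblin_mul (hst _ _) (hst _ _)) ?_
      have h1 : 1 - doeblin (prodFromTo p m (a - 1)) ≤ 1 := by
        linarith [doeblin_nonneg (hst m (a - 1))]
      have h2 : (0:ℝ) ≤ 1 - doeblin (prodFromTo p a n) := by
        linarith [doeblin_le_one (hst a n)]
      nlinarith
  intro m
  rw [Metric.tendsto_atTop]
  intro ε hε
  -- the shifted sums diverge
  have hdiv2 : Tendsto (fun K => ∑ j ∈ Finset.range K, α (m + j)) atTop atTop := by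
    have h1 : Tendsto (fun K : ℕ => ∑ k ∈ Finset.range (m + K), α k) atTop atTop :=
      hdiv.comp (tendsto_atTop_mono (fun K => Nat.le_add_left K m) tendsto_id)
    have h2 : (fun K => ∑ j ∈ Finset.range K, α (m + j)) =
        fun K => (∑ k ∈ Finset.range (m + K), α k) + -∑ k ∈ Finset.range m, α k := by
      funext K
      rw [Finset.sum_range_add]
      ring
    rw [h2]
    exact h1.atTop_add tendsto_const_nhds
  -- products over blocks tend to 0
  have hprod0 : Tendsto (fun K => ∏ j ∈ Finset.range K, (1 - α (m + j))) atTop (nhds 0) := by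
    have hexp : Tendsto (fun K => Real.exp (-∑ j ∈ Finset.range K, α (m + j))) atTop (nhds 0) :=
      Real.tendsto_exp_atBot.comp (tendsto_neg_atBot_iff.2 hdiv2)
    have hle : ∀ K, (0:ℝ) ≤ ∏ j ∈ Finset.range K, (1 - α (m + j)) := fun K =>
      Finset.prod_nonneg fun j _ => by linarith [hα1 (m + j)]
    have hub : ∀ K, ∏ j ∈ Finset.range K, (1 - α (m + j)) ≤
        Real.exp (-∑ j ∈ Finset.range K, α (m + j)) := by
      intro K
      calc ∏ j ∈ Finset.range K, (1 - α (m + j))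
          ≤ ∏ j ∈ Finset.range K, Real.exp (-α (m + j)) := by
            refine Finset.prod_le_prod (fun j _ => by linarith [hα1 (m + j)]) fun j _ => ?_
            have := Real.add_one_le_exp (-α (m + j))
            linarith
        _ = Real.exp (-∑ j ∈ Finset.range K, α (m + j)) := by
            rw [← Real.exp_sum, ← Finset.sum_neg_distrib]
    exact squeeze_zero hle hub hexp
  obtain ⟨K, hK⟩ : ∃ K, ∏ j ∈ Finset.range K, (1 - α (m + j)) < ε := by
    have := (hprod0.eventually (gt_mem_nhds hε)).exists
    simpa using this
  refine ⟨nseq (m + K), fun n hn => ?_⟩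
  have hb1 : 1 - doeblin (prodFromTo p m n) ≤ ∏ j ∈ Finset.range K, (1 - α (m + j)) := by
    have hc := chain K m n (by omega)
    have hpre := prefixb m (nseq m) n (hmono.le_apply)
      (by have := hmono.monotone (Nat.le_add_right m K); omega)
    linarith
  have hd1 : doeblin (prodFromTo p m n) ≤ 1 := doeblin_le_one (hst m n)
  rw [Real.dist_eq, abs_of_nonpos (by linarith)]
  linarith
end

section
/- Let S be a nonempty finite set, μ a probability distribution on S (viewed as a row vector), α ∈ (0,1], E ∈ ℰ with common row e, M ∈ 𝒫, and p = α·E + (1−α)·M a stochastic matrix. Fix m ≥ 0 and define the mixture distribution ν = Σ_{t=0}^{m} w_t · e·M^t, where w_t = α(1−α)^t / (1 − (1−α)^{m+1}). Then for all n > m, the total variation distance between the distribution μ·p^n of X_n and ν satisfies (1/2)·Σ_{s∈S} |(μ·p^n)(s) − ν(s)| ≤ (1−α)^{m+1}. -/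
open Finset Matrix

theorem sum_range_geom_weights_eq_one {K : Type*} [Field K] {α : K} {k : ℕ}
    (h : (1 - α) ^ k ≠ 1) : ∑ t ∈ range k, α * (1 - α) ^ t / (1 - (1 - α) ^ k) = 1 := by
  have hgeom := mul_neg_geom_sum (1 - α) k
  rw [sub_sub_cancel] at hgeom
  rw [← sum_div, ← mul_sum, hgeom, div_self (sub_ne_zero.2 h.symm)]

theorem sum_abs_sub_le_of_eq_smul_add {ι R : Type*} [Fintype ι] [CommRing R] [LinearOrder R]
    [IsStrictOrderedRing R] {u v r : ι → R} {c : R} (hv : v ∈ stdSimplex R ι)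
    (hr0 : 0 ≤ r) (hc : c ≤ 1) (hu : u = c • v + r) (hu1 : ∑ i, u i = 1) :
    ∑ i, |u i - v i| ≤ 2 * (1 - c) := by
  have hr1 : ∑ i, r i = 1 - c := by
    simp only [hu, Pi.add_apply, Pi.smul_apply, smul_eq_mul, sum_add_distrib, ← mul_sum,
      hv.2] at hu1
    linear_combination hu1
  calc ∑ i, |u i - v i| = ∑ i, |r i - (1 - c) * v i| := by
        simp only [hu, Pi.add_apply, Pi.smul_apply, smul_eq_mul]; congr! 2; ring
    _ ≤ ∑ i, (r i + (1 - c) * v i) := by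
        gcongr with i
        exact (abs_sub _ _).trans_eq <| by
          rw [abs_of_nonneg (hr0 i), abs_of_nonneg (mul_nonneg (sub_nonneg.2 hc) (hv.1 i))]
    _ = 2 * (1 - c) := by rw [sum_add_distrib, ← mul_sum, hr1, hv.2]; ring

section Stochastic

variable {S R : Type*} [Fintype S]

theorem IsStochastic.mem_rowStochastic [DecidableEq S] {p : Matrix S S ℝ} (hp : IsStochastic p) :
    p ∈ rowStochastic ℝ S :=
  mem_rowStochastic_iff_sum.2 hp

theorem vecMul_eq_sum_smul_of_rows_eq [Semiring R] {E : Matrix S S R} {e : S → R}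
    (hE : ∀ i j, E i j = e j) (x : S → R) : x ᵥ* E = (∑ i, x i) • e := by
  ext j
  simp [vecMul, dotProduct, hE, sum_mul]

variable [DecidableEq S]

theorem sum_vecMul_of_mem_rowStochastic [Semiring R] [PartialOrder R] [IsOrderedRing R]
    {A : Matrix S S R} (hA : A ∈ rowStochastic R S) (x : S → R) :
    ∑ j, (x ᵥ* A) j = ∑ i, x i := by
  rw [← dotProduct_one, ← dotProduct_mulVec, hA.2, dotProduct_one]

theorem vecMul_mem_stdSimplex [Semiring R] [PartialOrder R] [IsOrderedRing R]
    {A : Matrix S S R} (hA : A ∈ rowStochastic R S) {x : S → R} (hx : x ∈ stdSimplex R S) :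
    x ᵥ* A ∈ stdSimplex R S :=
  ⟨nonneg_vecMul_of_mem_rowStochastic hA hx.1, (sum_vecMul_of_mem_rowStochastic hA x).trans hx.2⟩

theorem vecMul_pow_eq_geom_mixture [CommRing R] [PartialOrder R] [IsOrderedRing R]
    {E M p : Matrix S S R} {e μ : S → R} {α : R} (hEe : ∀ i j, E i j = e j)
    (hp : p ∈ rowStochastic R S) (hpEM : p = α • E + (1 - α) • M) (hμ1 : ∑ s, μ s = 1) (k : ℕ) :
    μ ᵥ* p ^ k =
      ∑ t ∈ range k, (α * (1 - α) ^ t) • (e ᵥ* M ^ t) + (1 - α) ^ k • (μ ᵥ* M ^ k) := by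
  induction k with
  | zero => simp
  | succ k ih =>
    have hstep : μ ᵥ* p ^ (k + 1) = α • e + (1 - α) • ((μ ᵥ* p ^ k) ᵥ* M) := by
      rw [pow_succ, ← vecMul_vecMul, hpEM, vecMul_add, vecMul_smul, vecMul_smul,
        vecMul_eq_sum_smul_of_rows_eq hEe, ← hpEM,
        sum_vecMul_of_mem_rowStochastic (pow_mem hp k), hμ1, one_smul]
    rw [hstep, ih, add_vecMul, sum_vecMul, sum_range_succ']
    simp only [smul_vecMul, vecMul_vecMul, ← pow_succ, smul_add, smul_sum, smul_smul,
      mul_left_comm (1 - α) α, ← pow_succ', pow_zero, mul_one, vecMul_one]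
    abel

end Stochastic

theorem tv_bound_mixture_general
    {S : Type*} [Fintype S] [DecidableEq S]
    (μ e : S → ℝ) (hμ0 : ∀ s, 0 ≤ μ s) (hμ1 : ∑ s, μ s = 1)
    (he0 : ∀ s, 0 ≤ e s) (he1 : ∑ s, e s = 1)
    (α : ℝ) (hα0 : 0 < α) (hα1 : α ≤ 1)
    (E M p : Matrix S S ℝ)
    (hE : IsStochastic E) (hEe : ∀ i j, E i j = e j)
    (hM : IsStochastic M)
    (hp : p = α • E + (1 - α) • M)
    (m : ℕ) :
    ∀ n > m,
      (1 / 2 : ℝ) * ∑ s, |Matrix.vecMul μ (p ^ n) s -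
          ∑ t ∈ Finset.range (m + 1),
            (α * (1 - α) ^ t / (1 - (1 - α) ^ (m + 1))) * Matrix.vecMul e (M ^ t) s| ≤
        (1 - α) ^ (m + 1) := by
  intro n hn
  have hβ0 : 0 ≤ 1 - α := sub_nonneg.2 hα1
  have hM' := hM.mem_rowStochastic
  have hp' : p ∈ rowStochastic ℝ S :=
    hp ▸ convex_rowStochastic hE.mem_rowStochastic hM' hα0.le hβ0 (by ring)
  have hf : ∀ t, e ᵥ* M ^ t ∈ stdSimplex ℝ S := fun t =>
    vecMul_mem_stdSimplex (pow_mem hM' t) ⟨he0, he1⟩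
  set Z := 1 - (1 - α) ^ (m + 1)
  have hZ0 : 0 < Z := sub_pos.2 (pow_lt_one₀ hβ0 (by linarith) m.succ_ne_zero)
  set ν := ∑ t ∈ range (m + 1), (α * (1 - α) ^ t / Z) • (e ᵥ* M ^ t)
  have hν : ν ∈ stdSimplex ℝ S :=
    (convex_stdSimplex ℝ S).sum_mem (fun t _ => by positivity)
      (sum_range_geom_weights_eq_one (by linarith)) fun t _ => hf t
  set r := ∑ t ∈ Ico (m + 1) n, (α * (1 - α) ^ t) • (e ᵥ* M ^ t) + (1 - α) ^ n • (μ ᵥ* M ^ n)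
  have hr0 : 0 ≤ r := add_nonneg (sum_nonneg fun t _ => smul_nonneg (by positivity) (hf t).1)
    (smul_nonneg (by positivity) (vecMul_mem_stdSimplex (pow_mem hM' n) ⟨hμ0, hμ1⟩).1)
  have hdecomp : μ ᵥ* p ^ n = Z • ν + r := by
    rw [vecMul_pow_eq_geom_mixture hEe hp' hp hμ1, ← sum_range_add_sum_Ico _ hn, add_assoc]
    congr 1
    simp only [ν, smul_sum, smul_smul, mul_div_cancel₀ _ hZ0.ne']
  have htv := sum_abs_sub_le_of_eq_smul_add hν hr0 (sub_le_self 1 (pow_nonneg hβ0 _)) hdecomp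
    ((sum_vecMul_of_mem_rowStochastic (pow_mem hp' n) μ).trans hμ1)
  have hνs : ∀ s, ∑ t ∈ range (m + 1), α * (1 - α) ^ t / Z * (e ᵥ* M ^ t) s = ν s := by
    simp [ν, Finset.sum_apply]
  simp only [hνs]
  linarith

/-- The distribution of `X_n` is, for `n > m`, within `(1 - α)^(m+1)` in total variation
distance of the mixture `Σ_{t=0}^m (α (1-α)^t / (1 - (1-α)^(m+1))) • e M^t`. -/
theorem tv_bound_mixture
    {S : Type*} [Fintype S] [Nonempty S] [DecidableEq S]
    (μ e : S → ℝ) (hμ0 : ∀ s, 0 ≤ μ s) (hμ1 : ∑ s, μ s = 1)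
    (he0 : ∀ s, 0 ≤ e s) (he1 : ∑ s, e s = 1)
    (α : ℝ) (hα0 : 0 < α) (hα1 : α ≤ 1)
    (E M p : Matrix S S ℝ)
    (hE : IsStochastic E) (hEe : ∀ i j, E i j = e j)
    (hM : IsStochastic M)
    (hp : p = α • E + (1 - α) • M)
    (m : ℕ) :
    ∀ n > m,
      (1 / 2 : ℝ) * ∑ s, |Matrix.vecMul μ (p ^ n) s -
          ∑ t ∈ Finset.range (m + 1),
            (α * (1 - α) ^ t / (1 - (1 - α) ^ (m + 1))) * Matrix.vecMul e (M ^ t) s| ≤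
        (1 - α) ^ (m + 1) :=
  tv_bound_mixture_general μ e hμ0 hμ1 he0 he1 α hα0 hα1 E M p hE hEe hM hp m
end
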